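/- arXiv:2401.08877 — 2 statements merged into one kernel-verified Lean document; each statement's English description precedes it below -/
import Mathlib

section
/- Let φ : ℝ → ℂ be a Schwartz function and for t ∈ ℝ, t ≠ 0, define G₀(it) = ∫₀¹ (φ(x) − φ(0)) x^{it−1} dx + φ(0)/(it) + ∫₁^∞ φ(x) x^{it−1} dx. Then t·G₀(it) → 0 as |t| → ∞. -/
/-!
Integrating by parts against `x ^ (it) / (it)` on `(0, 1]` and on `(1, ∞)`, the boundary terms
cancel the term `φ(0)/(it)` and `G₀(it) = -(it)⁻¹ ∫₀^∞ φ'(x) x^(it) dx`, so that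
`t G₀(it) = i M(φ')(1 + it)`. The substitution `x = e^(-u)` turns this Mellin transform into the
Fourier transform of the integrable function `u ↦ e^(-u) φ'(e^(-u))` at `t/2π`, which tends
to zero by the Riemann–Lebesgue lemma.
-/

open MeasureTheory Complex Set Filter
open scoped Real Topology

theorem norm_ofReal_cpow_of_re_eq_zero {s : ℂ} (hs : s.re = 0) {x : ℝ} (hx : 0 < x) :
    ‖(x : ℂ) ^ s‖ = 1 := by
  simp [norm_cpow_eq_rpow_re_of_pos hx, hs]

theorem norm_ofReal_cpow_sub_one_of_re_eq_zero {s : ℂ} (hs : s.re = 0) {x : ℝ} (hx : 0 < x) :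
    ‖(x : ℂ) ^ (s - 1)‖ = x⁻¹ := by
  simp [norm_cpow_eq_rpow_re_of_pos hx, hs, Real.rpow_neg_one]

theorem hasDerivAt_ofReal_cpow_div_self {s : ℂ} (hs : s ≠ 0) {x : ℝ} (hx : x ≠ 0) :
    HasDerivAt (fun y : ℝ => (y : ℂ) ^ s / s) ((x : ℂ) ^ (s - 1)) x := by
  simpa using hasDerivAt_ofReal_cpow_const' hx (r := s - 1) (by simpa using hs)

theorem integrableOn_mul_cpow_of_re_eq_zero {g : ℝ → ℂ} {S : Set ℝ} (hS : MeasurableSet S)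
    (hS0 : S ⊆ Ioi 0) (hg : IntegrableOn g S) {s : ℂ} (hs : s.re = 0) :
    IntegrableOn (fun x => g x * (x : ℂ) ^ s) S := by
  refine hg.mul_bdd (c := 1) ?_ ?_
  · exact ((measurable_ofReal.pow_const s).aestronglyMeasurable)
  · filter_upwards [ae_restrict_mem hS] with x hx
    rw [norm_ofReal_cpow_of_re_eq_zero hs (hS0 hx)]

theorem exists_norm_sub_le_mul_of_contDiff {f : ℝ → ℂ} (hf : ContDiff ℝ 1 f) :
    ∃ M, ∀ x ∈ Icc (0 : ℝ) 1, ‖f x - f 0‖ ≤ M * x := by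
  obtain ⟨M, hM⟩ := isCompact_Icc.exists_bound_of_continuousOn
    (hf.continuous_deriv le_rfl).continuousOn (s := Icc (0 : ℝ) 1)
  refine ⟨M, fun x hx => ?_⟩
  simpa [abs_of_nonneg hx.1] using (convex_Icc (0 : ℝ) 1).norm_image_sub_le_of_norm_deriv_le
    (fun y _ => (hf.differentiable one_ne_zero).differentiableAt) hM
    (left_mem_Icc.2 zero_le_one) hx

theorem isBoundedUnder_norm_ofReal_cpow_div {s : ℂ} (hs : s.re = 0) {l : Filter ℝ}
    (hl : ∀ᶠ x in l, 0 < x) :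
    IsBoundedUnder (· ≤ ·) l (fun x : ℝ => ‖(x : ℂ) ^ s / s‖) :=
  isBoundedUnder_of_eventually_le (a := ‖s‖⁻¹) <| by
    filter_upwards [hl] with x hx
    simp [norm_ofReal_cpow_of_re_eq_zero hs hx]

theorem integral_Ioc_sub_mul_cpow_eq {f : ℝ → ℂ} (hf : ContDiff ℝ 1 f) {s : ℂ} (hs0 : s ≠ 0)
    (hs : s.re = 0) :
    ∫ x in Ioc (0 : ℝ) 1, (f x - f 0) * (x : ℂ) ^ (s - 1) =
      (f 1 - f 0) / s - (∫ x in Ioc (0 : ℝ) 1, deriv f x * (x : ℂ) ^ s) / s := by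
  obtain ⟨M, hM⟩ := exists_norm_sub_le_mul_of_contDiff hf
  set F : ℝ → ℂ := fun x => (f x - f 0) * ((x : ℂ) ^ s / s)
  have hF : ∀ x ∈ Ioo (0 : ℝ) 1,
      HasDerivAt F (deriv f x * (x : ℂ) ^ s / s + (f x - f 0) * (x : ℂ) ^ (s - 1)) x := by
    intro x hx
    exact (((hf.differentiable one_ne_zero x).hasDerivAt.sub_const (f 0)).mul
      (hasDerivAt_ofReal_cpow_div_self hs0 hx.1.ne')).congr_deriv (by ring)
  have hderiv_int : IntegrableOn (fun x => deriv f x * (x : ℂ) ^ s) (Ioc 0 1) :=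
    integrableOn_mul_cpow_of_re_eq_zero measurableSet_Ioc Ioc_subset_Ioi_self
      ((hf.continuous_deriv le_rfl).integrableOn_Icc.mono_set Ioc_subset_Icc_self) hs
  have hmain_int : IntegrableOn (fun x => (f x - f 0) * (x : ℂ) ^ (s - 1)) (Ioc 0 1) := by
    refine Measure.integrableOn_of_bounded (M := M) measure_Ioc_lt_top.ne ?_ ?_
    · exact ((hf.continuous.sub continuous_const).measurable.mul
        (measurable_ofReal.pow_const _)).aestronglyMeasurable
    · filter_upwards [ae_restrict_mem measurableSet_Ioc] with x hx
      rw [norm_mul, norm_ofReal_cpow_sub_one_of_re_eq_zero hs hx.1]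
      calc ‖f x - f 0‖ * x⁻¹ ≤ M * x * x⁻¹ :=
            mul_le_mul_of_nonneg_right (hM x (Ioc_subset_Icc_self hx)) (inv_nonneg.2 hx.1.le)
        _ = M := by field_simp [hx.1.ne']
  have hF0 : Tendsto F (𝓝[>] 0) (𝓝 0) :=
    (tendsto_nhdsWithin_of_tendsto_nhds (by
      simpa using (hf.continuous.tendsto 0).sub_const (f 0))).zero_mul_isBoundedUnder_le
      (isBoundedUnder_norm_ofReal_cpow_div hs self_mem_nhdsWithin)
  have hF1 : Tendsto F (𝓝[<] 1) (𝓝 (F 1)) :=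
    (((hf.continuous.sub continuous_const).continuousAt).mul
      (hasDerivAt_ofReal_cpow_div_self hs0 one_ne_zero).continuousAt).continuousWithinAt
  have hFTC := intervalIntegral.integral_eq_sub_of_hasDerivAt_of_tendsto zero_lt_one hF
    ((intervalIntegrable_iff_integrableOn_Ioc_of_le zero_le_one).2
      ((hderiv_int.div_const s).add hmain_int)) hF0 hF1
  rw [intervalIntegral.integral_of_le zero_le_one, integral_add (hderiv_int.div_const s) hmain_int,
    integral_div] at hFTC
  simp only [F, ofReal_one, one_cpow] at hFTC
  linear_combination hFTC

theorem integral_Ioi_mul_cpow_eq {f : ℝ → ℂ} (hf : Differentiable ℝ f)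
    (hfi : IntegrableOn f (Ioi 1)) (hf'i : IntegrableOn (deriv f) (Ioi 1))
    (hlim : Tendsto f atTop (𝓝 0)) {s : ℂ} (hs0 : s ≠ 0) (hs : s.re = 0) :
    ∫ x in Ioi (1 : ℝ), f x * (x : ℂ) ^ (s - 1) =
      -f 1 / s - (∫ x in Ioi (1 : ℝ), deriv f x * (x : ℂ) ^ s) / s := by
  have hv : ∀ x ∈ Ioi (1 : ℝ), HasDerivAt (fun y : ℝ => (y : ℂ) ^ s / s) ((x : ℂ) ^ (s - 1)) x :=
    fun x hx => hasDerivAt_ofReal_cpow_div_self hs0 (zero_lt_one.trans hx).ne'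
  have huv' : IntegrableOn (fun x => f x * (x : ℂ) ^ (s - 1)) (Ioi 1) := by
    refine hfi.mul_bdd (c := 1) (measurable_ofReal.pow_const _).aestronglyMeasurable ?_
    filter_upwards [ae_restrict_mem measurableSet_Ioi] with x (hx : 1 < x)
    rw [norm_ofReal_cpow_sub_one_of_re_eq_zero hs (zero_lt_one.trans hx)]
    exact inv_le_one_of_one_le₀ hx.le
  have hu'v : IntegrableOn (fun x => deriv f x * ((x : ℂ) ^ s / s)) (Ioi 1) := by
    have := (integrableOn_mul_cpow_of_re_eq_zero measurableSet_Ioi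
      (Ioi_subset_Ioi zero_le_one) hf'i hs).div_const s
    simp only [mul_div_assoc] at this
    exact this
  have h_one : Tendsto (f * fun x : ℝ => (x : ℂ) ^ s / s) (𝓝[>] 1) (𝓝 (f 1 * s⁻¹)) := by
    have := ((hf.continuous.continuousAt (x := 1)).mul
      (hasDerivAt_ofReal_cpow_div_self hs0 one_ne_zero).continuousAt).continuousWithinAt
      (s := Ioi 1)
    simpa [ContinuousWithinAt] using this
  have h_infty : Tendsto (f * fun x : ℝ => (x : ℂ) ^ s / s) atTop (𝓝 0) :=
    hlim.zero_mul_isBoundedUnder_le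
      (isBoundedUnder_norm_ofReal_cpow_div hs (eventually_gt_atTop 0))
  rw [integral_Ioi_mul_deriv_eq_deriv_mul (fun x _ => (hf x).hasDerivAt) hv huv' hu'v h_one
    h_infty]
  simp_rw [← mul_div_assoc, integral_div]
  ring

theorem tendsto_mellin_vertical_cocompact {E : Type*} [NormedAddCommGroup E] [NormedSpace ℂ E]
    (f : ℝ → E) (σ : ℝ) :
    Tendsto (fun t : ℝ => mellin f (σ + t * I)) (cocompact ℝ) (𝓝 0) := by
  have h2π : (2 * π)⁻¹ ≠ 0 := inv_ne_zero (by positivity)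
  convert (Real.zero_at_infty_fourier (fun u : ℝ => Real.exp (-σ * u) • f (Real.exp (-u)))).comp
    (tendsto_cocompact_mul_right₀ h2π) using 2 with t
  simp [mellin_eq_fourier, div_eq_mul_inv]

/-- The function `G₀` of the paper: the continuation of `mellin f` to the line `re s = 0`. -/
noncomputable def mellinContinuation (f : ℝ → ℂ) (s : ℂ) : ℂ :=
  (∫ x in Ioc (0 : ℝ) 1, (f x - f 0) * (x : ℂ) ^ (s - 1)) + f 0 / s +
    ∫ x in Ioi (1 : ℝ), f x * (x : ℂ) ^ (s - 1)

theorem mellinContinuation_eq_neg_mellin_deriv_div {f : ℝ → ℂ} (hf : ContDiff ℝ 1 f)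
    (hfi : IntegrableOn f (Ioi 1)) (hf'i : IntegrableOn (deriv f) (Ioi 1))
    (hlim : Tendsto f atTop (𝓝 0)) {s : ℂ} (hs0 : s ≠ 0) (hs : s.re = 0) :
    mellinContinuation f s = -mellin (deriv f) (1 + s) / s := by
  have hint : IntegrableOn (fun x => deriv f x * (x : ℂ) ^ s) (Ioi 0) := by
    refine integrableOn_mul_cpow_of_re_eq_zero measurableSet_Ioi subset_rfl ?_ hs
    rw [← Ioc_union_Ioi_eq_Ioi zero_le_one]
    exact ((hf.continuous_deriv le_rfl).integrableOn_Icc.mono_set Ioc_subset_Icc_self).union hf'i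
  have hmellin : mellin (deriv f) (1 + s) =
      (∫ x in Ioc (0 : ℝ) 1, deriv f x * (x : ℂ) ^ s) +
        ∫ x in Ioi (1 : ℝ), deriv f x * (x : ℂ) ^ s := by
    rw [← setIntegral_union (Ioc_disjoint_Ioi le_rfl) measurableSet_Ioi
      (hint.mono_set Ioc_subset_Ioi_self) (hint.mono_set (Ioi_subset_Ioi zero_le_one)),
      Ioc_union_Ioi_eq_Ioi zero_le_one]
    simp [mellin, mul_comm]
  rw [mellinContinuation, integral_Ioc_sub_mul_cpow_eq hf hs0 hs,
    integral_Ioi_mul_cpow_eq (hf.differentiable one_ne_zero) hfi hf'i hlim hs0 hs, hmellin]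
  ring

theorem tendsto_mul_mellinContinuation_mul_I {f : ℝ → ℂ} (hf : ContDiff ℝ 1 f)
    (hfi : IntegrableOn f (Ioi 1)) (hf'i : IntegrableOn (deriv f) (Ioi 1))
    (hlim : Tendsto f atTop (𝓝 0)) :
    Tendsto (fun t : ℝ => (t : ℂ) * mellinContinuation f (t * I)) (cocompact ℝ) (𝓝 0) := by
  have hdecay := (tendsto_mellin_vertical_cocompact (deriv f) 1).const_mul I
  rw [mul_zero] at hdecay
  refine hdecay.congr' ?_
  filter_upwards [(isCompact_singleton (x := (0 : ℝ))).compl_mem_cocompact] with t (ht : t ≠ 0)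
  have ht' : (t : ℂ) ≠ 0 := ofReal_ne_zero.2 ht
  rw [mellinContinuation_eq_neg_mellin_deriv_div hf hfi hf'i hlim (mul_ne_zero ht' I_ne_zero)
    (by simp), ofReal_one]
  field_simp
  rw [I_sq]
  ring

/-- for a Schwartz function `φ`, with `G₀(it)` the value at `s = it`
of the meromorphic continuation of its Mellin transform, `t·G₀(it) → 0` as
`|t| → ∞`. -/
theorem mellin_schwartz_imaginary_axis_decay (φ : SchwartzMap ℝ ℂ) :
    Tendsto
      (fun t : ℝ =>
        (t : ℂ) *
          ((∫ x in Ioc (0 : ℝ) 1, (φ x - φ 0) * (x : ℂ) ^ ((t : ℂ) * Complex.I - 1)) +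
            φ 0 / ((t : ℂ) * Complex.I) +
            ∫ x in Ioi (1 : ℝ), φ x * (x : ℂ) ^ ((t : ℂ) * Complex.I - 1)))
      (cocompact ℝ) (nhds 0) := by
  have hderiv : Integrable (deriv φ) := by
    rw [← funext (SchwartzMap.derivCLM_apply ℝ φ)]
    exact (SchwartzMap.derivCLM ℝ ℂ φ).integrable
  exact tendsto_mul_mellinContinuation_mul_I (φ.smooth 1) φ.integrable.integrableOn
    hderiv.integrableOn (φ.toZeroAtInfty.zero_at_infty'.mono_left atTop_le_cocompact)
end

section
/- (Injectivity of the Mellin transform on S(ℝ⁺)) Let φ, ψ : ℝ → ℂ be Schwartz functions and suppose there exists c > 0 such that for every t ∈ ℝ, ∫₀^∞ φ(x) x^{c+it−1} dx = ∫₀^∞ ψ(x) x^{c+it−1} dx. Then φ(x) = ψ(x) for all x ≥ 0. -/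
/-!
A Schwartz function decays faster than any power at infinity and is bounded near `0`, so its
Mellin transform converges on the whole half-plane `Re s > 0`. If two of them have the same
transform on the line `Re s = c`, the Mellin transform of their difference vanishes there; it is
then trivially integrable along that line, so Mellin inversion recovers the difference as `0` on
`(0, ∞)`, and continuity extends this to `x = 0`.
-/

open MeasureTheory Complex Set Filter

namespace SchwartzMap

variable {E : Type*} [NormedAddCommGroup E] [NormedSpace ℂ E]

theorem isBigO_atTop_rpow (f : 𝓢(ℝ, E)) (a : ℝ) : f =O[atTop] (· ^ a) :=
  ((f.isBigO_cocompact_rpow a).mono atTop_le_cocompact).congr' EventuallyEq.rfl <|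
    (eventually_ge_atTop 0).mono fun x hx ↦ by simp only [Real.norm_of_nonneg hx]

theorem mellinConvergent (f : 𝓢(ℝ, E)) {s : ℂ} (hs : 0 < s.re) : MellinConvergent f s :=
  mellinConvergent_of_isBigO_rpow (b := 0) (f.continuous.locallyIntegrable.locallyIntegrableOn _)
    (f.isBigO_atTop_rpow _) (lt_add_one s.re)
    (by simpa using (f.continuous.tendsto 0).mono_left nhdsWithin_le_nhds |>.isBigO_one ℝ) hs

end SchwartzMap

theorem eqOn_zero_of_mellin_eq_zero {E : Type*} [NormedAddCommGroup E] [NormedSpace ℂ E]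
    [CompleteSpace E] {f : ℝ → E} {σ : ℝ} (hf : MellinConvergent f σ)
    (hfc : ContinuousOn f (Ioi 0)) (hmellin : ∀ t : ℝ, mellin f (σ + t * I) = 0) :
    EqOn f 0 (Ioi 0) := fun x hx ↦ by
  have hvert : VerticalIntegrable (mellin f) σ := by
    simp [VerticalIntegrable, hmellin]
  rw [← mellinInv_mellin_eq σ f hx hf hvert (hfc.continuousAt (Ioi_mem_nhds hx))]
  simp [mellinInv, hmellin]

theorem mellin_eq_setIntegral_mul (f : ℝ → ℂ) (s : ℂ) :
    mellin f s = ∫ x in Ioi (0 : ℝ), f x * (x : ℂ) ^ (s - 1) := by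
  simp only [mellin, smul_eq_mul, mul_comm]

/-- injectivity of the Mellin transform on `S(ℝ⁺)`: if two
Schwartz functions have the same Mellin transform along some vertical line
`Re s = c > 0`, then they agree on `[0,∞)`. -/
theorem mellin_schwartz_injective (φ ψ : SchwartzMap ℝ ℂ) (c : ℝ) (hc : 0 < c)
    (h : ∀ t : ℝ,
      (∫ x in Ioi (0 : ℝ), φ x * (x : ℂ) ^ ((c : ℂ) + (t : ℂ) * Complex.I - 1)) =
        ∫ x in Ioi (0 : ℝ), ψ x * (x : ℂ) ^ ((c : ℂ) + (t : ℂ) * Complex.I - 1)) :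
    ∀ x : ℝ, 0 ≤ x → φ x = ψ x := by
  have hre : ∀ t : ℝ, 0 < ((c : ℂ) + t * I).re := by simpa using hc
  have hmellin (t : ℝ) : mellin (⇑(φ - ψ)) (c + t * I) = 0 := by
    rw [← sub_eq_zero.mpr (h t), ← mellin_eq_setIntegral_mul, ← mellin_eq_setIntegral_mul]
    exact (hasMellin_sub (φ.mellinConvergent (hre t)) (ψ.mellinConvergent (hre t))).2
  have hpos : EqOn (⇑(φ - ψ)) 0 (Ioi 0) :=
    eqOn_zero_of_mellin_eq_zero ((φ - ψ).mellinConvergent (by simpa using hc))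
      (φ - ψ).continuous.continuousOn hmellin
  have hnonneg : EqOn (⇑(φ - ψ)) 0 (Ici 0) :=
    closure_Ioi (0 : ℝ) ▸ hpos.closure (φ - ψ).continuous continuous_const
  exact fun x hx ↦ sub_eq_zero.mp (hnonneg hx)
end
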